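/- Boundary-data independence of exponentially small differences of Weyl-Titchmarsh matrices (Lemma 4.9a, abstract form): Let m ≥ 1 and let α, α̂ ∈ ℂ^{m×2m} each satisfy ρρ* = I_m and ρJρ* = 0. Fix a > 0 and θ ∈ (0, π), and let M̂_1, M̂_2 be ℂ^{m×m}-valued functions defined on the ray ρ_θ = {r·e^{iθ} : r > 0} such that M̂_j(z) → i·I_m as |z| → ∞ along ρ_θ (j = 1, 2), and such that for every ε > 0 there exist C, R > 0 with ‖M̂_1(z) − M̂_2(z)‖ ≤ C·exp(−2·Im(z)·(a − ε)) for all z ∈ ρ_θ with |z| ≥ R. Then there is R_0 > 0 such that for z ∈ ρ_θ with |z| ≥ R_0 the matrices αα̂* + αJα̂*·M̂_j(z) are invertible (j = 1, 2), and the transformed functions M_j(z) = [−αJα̂* + αα̂*·M̂_j(z)]·[αα̂* + αJα̂*·M̂_j(z)]^{-1} satisfy: for every ε > 0 there exist C', R' > 0 with ‖M_1(z) − M_2(z)‖ ≤ C'·exp(−2·Im(z)·(a − ε)) for all z ∈ ρ_θ with |z| ≥ R'. -/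

import Mathlib

open MeasureTheory Matrix Filter Set
open scoped Matrix.Norms.L2Operator ComplexOrder

noncomputable section

abbrev DMat (m : ℕ) := Matrix (Fin m) (Fin m) ℂ
abbrev DMat2 (m : ℕ) := Matrix (Fin m ⊕ Fin m) (Fin m ⊕ Fin m) ℂ

/-- The matrix J = [[0, -I],[I, 0]]. -/
def Jm (m : ℕ) : DMat2 m := Matrix.fromBlocks 0 (-1) 1 0

/-- Imaginary part of a square complex matrix: (M - M*)/(2i). -/
def matIm {n : Type*} (M : Matrix n n ℂ) : Matrix n n ℂ :=
  (2 * Complex.I)⁻¹ • (M - Mᴴ)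

/-- Dirac-type potential: locally integrable, a.e. self-adjoint. -/
def IsDiracPotential (m : ℕ) (B : ℝ → DMat2 m) : Prop :=
  LocallyIntegrable B volume ∧ ∀ᵐ x : ℝ, (B x).IsHermitian

/-- `F` is locally absolutely continuous on `S` with a.e. derivative `F'`. -/
def AEDerivOn (m : ℕ) (S : Set ℝ) (F F' : ℝ → DMat m) : Prop :=
  LocallyIntegrableOn F' S volume ∧
    ∀ x ∈ S, ∀ y ∈ S, F y = F x + ∫ t in x..y, F' t

/-- `V` is a locally absolutely continuous solution on `S` of the Riccati equation
`V' + z V² + V B₂₂ V + B₁₂ V + V B₂₁ + B₁₁ + z = 0`. -/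
def RiccatiOn (m : ℕ) (B : ℝ → DMat2 m) (z : ℂ) (S : Set ℝ) (V : ℝ → DMat m) : Prop :=
  ∃ V' : ℝ → DMat m, AEDerivOn m S V V' ∧
    ∀ᵐ x : ℝ, x ∈ S →
      V' x + z • (V x * V x) + V x * (B x).toBlocks₂₂ * V x
        + (B x).toBlocks₁₂ * V x + V x * (B x).toBlocks₂₁ + (B x).toBlocks₁₁
        + z • (1 : DMat m) = 0

/-- Open sector with vertex 0, symmetry axis i·ℝ₊, in the upper half-plane. -/
def sector (ε : ℝ) : Set ℂ := {z : ℂ | ε < z.arg ∧ z.arg < Real.pi - ε}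

/-- Column block matrix [I; M]. -/
def colI (m : ℕ) (M : DMat m) : Matrix (Fin m ⊕ Fin m) (Fin m) ℂ := Matrix.fromRows 1 M

/-- The Weyl disk defining matrix E_c(M). -/
def Ec (m : ℕ) (z : ℂ) (x0 c : ℝ) (Ψ : ℝ → DMat2 m) (M : DMat m) : DMat m :=
  Real.sign ((x0 - c) * z.im) •
    ((Ψ c * colI m M)ᴴ * (Complex.I • Jm m) * (Ψ c * colI m M))

/-- Matrix solutions of the Hamiltonian system J Ψ' = (zA + B) Ψ on ℝ. -/
def IsHamMatSol (m : ℕ) {κ : Type} [Fintype κ] [DecidableEq κ] (A B : ℝ → DMat2 m) (z : ℂ)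
    (Ψ : ℝ → Matrix (Fin m ⊕ Fin m) κ ℂ) : Prop :=
  ∃ Ψ' : ℝ → Matrix (Fin m ⊕ Fin m) κ ℂ,
    LocallyIntegrable Ψ' volume ∧
    (∀ a b : ℝ, Ψ b = Ψ a + ∫ t in a..b, Ψ' t) ∧
    (∀ᵐ x : ℝ, Jm m * Ψ' x = (z • A x + B x) * Ψ x)

/-- Vector solutions of the Hamiltonian system. -/
def IsHamVecSol (m : ℕ) (A B : ℝ → DMat2 m) (z : ℂ)
    (ψ : ℝ → (Fin m ⊕ Fin m) → ℂ) : Prop :=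
  ∃ ψ' : ℝ → (Fin m ⊕ Fin m) → ℂ,
    LocallyIntegrable ψ' volume ∧
    (∀ a b : ℝ, ψ b = ψ a + ∫ t in a..b, ψ' t) ∧
    (∀ᵐ x : ℝ, (Jm m) *ᵥ ψ' x = (z • A x + B x) *ᵥ ψ x)

/-- Hypothesis 2.1. -/
structure Hyp21 (m : ℕ) (A B : ℝ → DMat2 m) : Prop where
  locA : LocallyIntegrable A volume
  locB : LocallyIntegrable B volume
  posA : ∀ᵐ x : ℝ, (A x).PosSemidef
  hermB : ∀ᵐ x : ℝ, (B x).IsHermitian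

/-- Atkinson's definiteness Hypothesis 2.2. -/
def Atkinson (m : ℕ) (A B : ℝ → DMat2 m) : Prop :=
  ∀ z : ℂ, ∀ ψ : ℝ → (Fin m ⊕ Fin m) → ℂ, IsHamVecSol m A B z ψ →
    (∃ x, ψ x ≠ 0) → ∀ a b : ℝ, a < b →
      0 < (∫ x in a..b, (star (ψ x)) ⬝ᵥ ((A x) *ᵥ (ψ x))).re

/-- Boundary data conditions (2.8e). -/
def IsBdry (m : ℕ) (α : Matrix (Fin m) (Fin m ⊕ Fin m) ℂ) : Prop :=
  α * αᴴ = 1 ∧ α * Jm m * αᴴ = 0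

/-- Initial value (α*  Jα*) for the normalized fundamental system. -/
def initΨ (m : ℕ) (α : Matrix (Fin m) (Fin m ⊕ Fin m) ℂ) : DMat2 m :=
  Matrix.fromCols αᴴ (Jm m * αᴴ)

/-- The interval from x₀ toward c: [x₀, c) if c > x₀, (c, x₀] if c < x₀. -/
def towardInt (x0 c : ℝ) : Set ℝ := Set.Ico x0 c ∪ Set.Ioc c x0


/-- `U(z,x) = Ψ(z,x)·[I; M]`. -/
def Ufun (m : ℕ) (Ψ : ℝ → DMat2 m) (M : DMat m) (x : ℝ) :
    Matrix (Fin m ⊕ Fin m) (Fin m) ℂ := Ψ x * colI m M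

/-- Top `m×m` component of `U`. -/
def u1fun (m : ℕ) (Ψ : ℝ → DMat2 m) (M : DMat m) (x : ℝ) : DMat m :=
  Matrix.toRows₁ (Ufun m Ψ M x)

/-- Bottom `m×m` component of `U`. -/
def u2fun (m : ℕ) (Ψ : ℝ → DMat2 m) (M : DMat m) (x : ℝ) : DMat m :=
  Matrix.toRows₂ (Ufun m Ψ M x)

/-- Cayley-type transform `ϑ = (u₁ + iσu₂)(u₁ − iσu₂)⁻¹`. -/
def cayley (m : ℕ) (σ : ℝ) (u1 u2 : DMat m) : DMat m :=
  (u1 + ((σ : ℂ) * Complex.I) • u2) * (u1 - ((σ : ℂ) * Complex.I) • u2)⁻¹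

/-- The m×m blocks of a 2m×2m matrix, indexed by `Fin 2`. -/
def blkOf (m : ℕ) (M : DMat2 m) : Fin 2 → Fin 2 → DMat m := fun a b =>
  if a = 0 then (if b = 0 then M.toBlocks₁₁ else M.toBlocks₁₂)
  else (if b = 0 then M.toBlocks₂₁ else M.toBlocks₂₂)

/-- Full-line Weyl-Titchmarsh matrix built from the half-line ones (eq. (2.620)). -/
def weylFull (m : ℕ) (Mm Mp : DMat m) : DMat2 m :=
  Matrix.fromBlocks ((Mm - Mp)⁻¹) ((2:ℂ)⁻¹ • ((Mm - Mp)⁻¹ * (Mm + Mp)))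
    ((2:ℂ)⁻¹ • ((Mm + Mp) * (Mm - Mp)⁻¹)) (Mp * (Mm - Mp)⁻¹ * Mm)

/-- Pair solutions (u₁, u₂) of the Dirac system on a set `S`. -/
def DiracPairSol (m : ℕ) (B : ℝ → DMat2 m) (z : ℂ) (S : Set ℝ)
    (u1 u2 : ℝ → DMat m) : Prop :=
  ∃ w1 w2 : ℝ → DMat m, AEDerivOn m S u1 w1 ∧ AEDerivOn m S u2 w2 ∧
    ∀ᵐ x : ℝ, x ∈ S →
      (-(w2 x) = (z • (1 : DMat m) + (B x).toBlocks₁₁) * u1 x + (B x).toBlocks₁₂ * u2 x ∧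
        w1 x = (B x).toBlocks₂₁ * u1 x + (z • (1 : DMat m) + (B x).toBlocks₂₂) * u2 x)

/-- Square-integrable solutions of the Dirac system on `[c, ∞)`. -/
def NplusSet (m : ℕ) (B : ℝ → DMat2 m) (z : ℂ) (c : ℝ) :
    Set (Set.Ici c → (Fin m ⊕ Fin m) → ℂ) :=
  {φ | ∃ w : ℝ → (Fin m ⊕ Fin m) → ℂ,
    LocallyIntegrableOn w (Set.Ici c) volume ∧
    (∀ x y : Set.Ici c, φ y = φ x + ∫ t in (x : ℝ)..(y : ℝ), w t) ∧
    (∀ᵐ t : ℝ, ∀ ht : t ∈ Set.Ici c,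
      (Jm m) *ᵥ w t = (z • (1 : DMat2 m) + B t) *ᵥ φ ⟨t, ht⟩) ∧
    IntegrableOn (fun t : ℝ =>
      if ht : t ∈ Set.Ici c then ∑ i, ‖φ ⟨t, ht⟩ i‖ ^ 2 else 0) (Set.Ici c) volume}

/-- Square-integrable solutions of the Dirac system on `(−∞, c]`. -/
def NminusSet (m : ℕ) (B : ℝ → DMat2 m) (z : ℂ) (c : ℝ) :
    Set (Set.Iic c → (Fin m ⊕ Fin m) → ℂ) :=
  {φ | ∃ w : ℝ → (Fin m ⊕ Fin m) → ℂ,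
    LocallyIntegrableOn w (Set.Iic c) volume ∧
    (∀ x y : Set.Iic c, φ y = φ x + ∫ t in (x : ℝ)..(y : ℝ), w t) ∧
    (∀ᵐ t : ℝ, ∀ ht : t ∈ Set.Iic c,
      (Jm m) *ᵥ w t = (z • (1 : DMat2 m) + B t) *ᵥ φ ⟨t, ht⟩) ∧
    IntegrableOn (fun t : ℝ =>
      if ht : t ∈ Set.Iic c then ∑ i, ‖φ ⟨t, ht⟩ i‖ ^ 2 else 0) (Set.Iic c) volume}


/-!
With `A = αα̂*` and `B = αJα̂*`, the denominator at `M̂ = i` is `A + iB = α(1 + iJ)α̂*`, which is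
unitary: the boundary conditions make `[α; αJ]` unitary, and then `(1 + iJ)α*α(1 + iJ) = 1 + iJ`.
So the linear fractional transformation `T` is defined near `i`, and the identity
`T X₁ - T X₂ = (A - (T X₂) B)(X₁ - X₂)(A + B X₁)⁻¹` shows that it is Lipschitz there. Since
`M̂₁, M̂₂ → i`, the difference `M₁ - M₂` is therefore `O(M̂₁ - M̂₂)`.
-/

open Asymptotics Topology

section LinearFractional

variable {R : Type*}

/-- The linear fractional transformation (2.41). -/
def linFrac [Ring R] (A B X : R) : R := (-B + A * X) * Ring.inverse (A + B * X)

theorem linFrac_sub_linFrac [Ring R] {A B X₁ X₂ : R} (h₁ : IsUnit (A + B * X₁))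
    (h₂ : IsUnit (A + B * X₂)) :
    linFrac A B X₁ - linFrac A B X₂
      = (A - linFrac A B X₂ * B) * (X₁ - X₂) * Ring.inverse (A + B * X₁) := by
  have hT₂ : linFrac A B X₂ * (A + B * X₂) = -B + A * X₂ := by
    rw [linFrac, mul_assoc, Ring.inverse_mul_cancel _ h₂, mul_one]
  calc linFrac A B X₁ - linFrac A B X₂
      = (-B + A * X₁ - linFrac A B X₂ * (A + B * X₁)) * Ring.inverse (A + B * X₁) := by
        rw [sub_mul, mul_assoc (linFrac A B X₂), Ring.mul_inverse_cancel _ h₁, mul_one, linFrac]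
    _ = _ := by
        congr 1
        have hA : linFrac A B X₂ * A = -B + A * X₂ - linFrac A B X₂ * B * X₂ := by
          rw [← hT₂]; noncomm_ring
        rw [mul_add, hA]; noncomm_ring

variable [NormedRing R] [CompleteSpace R] {ι : Type*} {l : Filter ι}

theorem Filter.Tendsto.eventually_isUnit {f : ι → R} {x : R} (hf : Tendsto f l (𝓝 x))
    (hx : IsUnit x) : ∀ᶠ i in l, IsUnit (f i) :=
  hf.eventually (Units.isOpen.mem_nhds hx)

theorem isBigO_linFrac_sub_linFrac {A B X₀ : R} {X₁ X₂ : ι → R} (h₀ : IsUnit (A + B * X₀))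
    (h₁ : Tendsto X₁ l (𝓝 X₀)) (h₂ : Tendsto X₂ l (𝓝 X₀)) :
    (fun i => linFrac A B (X₁ i) - linFrac A B (X₂ i)) =O[l] (fun i => X₁ i - X₂ i) := by
  have hD₁ : Tendsto (fun i => A + B * X₁ i) l (𝓝 (A + B * X₀)) :=
    tendsto_const_nhds.add (tendsto_const_nhds.mul h₁)
  have hD₂ : Tendsto (fun i => A + B * X₂ i) l (𝓝 (A + B * X₀)) :=
    tendsto_const_nhds.add (tendsto_const_nhds.mul h₂)
  have hinv {D : ι → R} (hD : Tendsto D l (𝓝 (A + B * X₀))) :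
      Tendsto (fun i => Ring.inverse (D i)) l (𝓝 (Ring.inverse (A + B * X₀))) :=
    (NormedRing.inverse_continuousAt h₀.unit).tendsto.comp hD
  have hT₂ : Tendsto (fun i => A - linFrac A B (X₂ i) * B) l (𝓝 (A - linFrac A B X₀ * B)) :=
    tendsto_const_nhds.sub
      (((tendsto_const_nhds.add (tendsto_const_nhds.mul h₂)).mul (hinv hD₂)).mul_const B)
  have hΔ : (fun i => X₁ i - X₂ i) =O[l] (fun i => ‖X₁ i - X₂ i‖) :=
    isBigO_norm_right.mpr (isBigO_refl _ _)
  refine ((((hT₂.isBigO_one ℝ).mul hΔ).mul ((hinv hD₁).isBigO_one ℝ)).congr' ?_ ?_).trans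
    (isBigO_norm_left.mpr (isBigO_refl _ _))
  · filter_upwards [hD₁.eventually_isUnit h₀, hD₂.eventually_isUnit h₀] with i hu₁ hu₂
    exact (linFrac_sub_linFrac hu₁ hu₂).symm
  · exact Eventually.of_forall fun i => by simp

end LinearFractional

theorem exists_pos_forall_ge_of_eventually_atTop {p : ℝ → Prop} (h : ∀ᶠ r in atTop, p r) :
    ∃ R > 0, ∀ r, R ≤ r → p r := by
  obtain ⟨R, hR⟩ := eventually_atTop.mp h
  exact ⟨max R 1, by positivity, fun r hr => hR r ((le_max_left R 1).trans hr)⟩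

theorem isBigO_atTop_iff_exists_pos_bound {E : Type*} [Norm E] {f : ℝ → E} {g : ℝ → ℝ}
    (hg : ∀ r, 0 ≤ g r) :
    f =O[atTop] g ↔ ∃ C > 0, ∃ R > 0, ∀ r, R ≤ r → ‖f r‖ ≤ C * g r := by
  simp only [isBigO_iff', Real.norm_of_nonneg (hg _)]
  refine ⟨fun ⟨C, hC, h⟩ => ⟨C, hC, exists_pos_forall_ge_of_eventually_atTop h⟩,
    fun ⟨C, hC, R, _, h⟩ => ⟨C, hC, eventually_atTop.mpr ⟨R, h⟩⟩⟩

section BoundaryData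

variable {m : ℕ} {α αh : Matrix (Fin m) (Fin m ⊕ Fin m) ℂ}

theorem Jm_mul_Jm (m : ℕ) : Jm m * Jm m = -1 := by
  simp [Jm, Matrix.fromBlocks_multiply, Matrix.fromBlocks_neg, ← Matrix.fromBlocks_one]

theorem conjTranspose_Jm (m : ℕ) : (Jm m)ᴴ = -Jm m := by
  simp [Jm, Matrix.fromBlocks_conjTranspose, Matrix.fromBlocks_neg]

-- `Q = [α; αJ]` satisfies `Q Qᴴ = 1` by the boundary conditions, hence also `Qᴴ Q = 1`.
theorem IsBdry.conjTranspose_mul_sub (hα : IsBdry m α) :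
    αᴴ * α - Jm m * (αᴴ * α) * Jm m = 1 := by
  have hαJ : α * (Jm m * αᴴ) = 0 := by rw [← Matrix.mul_assoc]; exact hα.2
  have hQ : Matrix.fromRows α (α * Jm m) * (Matrix.fromRows α (α * Jm m))ᴴ = 1 := by
    simp only [Matrix.conjTranspose_fromRows_eq_fromCols_conjTranspose,
      Matrix.fromRows_mul_fromCols, Matrix.conjTranspose_mul, conjTranspose_Jm]
    rw [← Matrix.fromBlocks_one]
    congr 1
    · exact hα.1
    · simp [hαJ]
    · exact hα.2
    · rw [Matrix.neg_mul, Matrix.mul_neg, Matrix.mul_assoc, ← Matrix.mul_assoc (Jm m), Jm_mul_Jm]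
      simp [hα.1]
  have hQ' := mul_eq_one_comm.mp hQ
  simp only [Matrix.conjTranspose_fromRows_eq_fromCols_conjTranspose,
    Matrix.fromCols_mul_fromRows, Matrix.conjTranspose_mul, conjTranspose_Jm] at hQ'
  rw [← hQ']
  simp only [Matrix.neg_mul, Matrix.mul_assoc, sub_eq_add_neg]

theorem IsBdry.one_add_I_smul_Jm_mul_mul (hα : IsBdry m α) :
    (1 + Complex.I • Jm m) * (αᴴ * α) * (1 + Complex.I • Jm m) = 1 + Complex.I • Jm m := by
  set S := αᴴ * α
  set J := Jm m
  have hS : S = 1 + J * S * J := sub_eq_iff_eq_add.mp hα.conjTranspose_mul_sub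
  have hSJ : S * J + J * S = J := by
    calc S * J + J * S = (1 + J * S * J) * J + J * S := by rw [← hS]
      _ = J + J * S * (J * J) + J * S := by noncomm_ring
      _ = J := by rw [Jm_mul_Jm]; noncomm_ring
  calc (1 + Complex.I • J) * S * (1 + Complex.I • J)
      = S - J * S * J + Complex.I • (S * J + J * S) := by
        simp only [add_mul, mul_add, Matrix.smul_mul, Matrix.mul_smul, smul_smul,
          Complex.I_mul_I, neg_smul, one_smul, mul_one, one_mul, smul_add, Matrix.mul_assoc]
        abel
    _ = 1 + Complex.I • J := by rw [hα.conjTranspose_mul_sub, hSJ]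

theorem IsBdry.mul_one_add_I_smul_Jm_mul_mem_unitaryGroup (hα : IsBdry m α) (hαh : IsBdry m αh) :
    α * (1 + Complex.I • Jm m) * αhᴴ ∈ Matrix.unitaryGroup (Fin m) ℂ := by
  have hP : (1 + Complex.I • Jm m)ᴴ = 1 + Complex.I • Jm m := by
    simp [Matrix.conjTranspose_add, Matrix.conjTranspose_smul, conjTranspose_Jm]
  rw [Matrix.mem_unitaryGroup_iff', Matrix.star_eq_conjTranspose]
  calc (α * (1 + Complex.I • Jm m) * αhᴴ)ᴴ * (α * (1 + Complex.I • Jm m) * αhᴴ)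
      = αh * ((1 + Complex.I • Jm m) * (αᴴ * α) * (1 + Complex.I • Jm m)) * αhᴴ := by
        simp only [Matrix.conjTranspose_mul, Matrix.conjTranspose_conjTranspose, hP,
          Matrix.mul_assoc]
    _ = 1 := by
        rw [hα.one_add_I_smul_Jm_mul_mul, Matrix.mul_add, Matrix.add_mul, Matrix.mul_one,
          Matrix.mul_smul, Matrix.smul_mul, hαh.1, hαh.2, smul_zero, add_zero]

end BoundaryData

theorem statement17_general (m : ℕ)
    (α αh : Matrix (Fin m) (Fin m ⊕ Fin m) ℂ) (hα : IsBdry m α) (hαh : IsBdry m αh)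
    (a θ : ℝ)
    (M1 M2 : ℂ → DMat m)
    (hlim1 : Filter.Tendsto (fun r : ℝ => M1 ((r : ℂ) * Complex.exp (Complex.I * (θ : ℂ))))
      Filter.atTop (nhds (Complex.I • (1 : DMat m))))
    (hlim2 : Filter.Tendsto (fun r : ℝ => M2 ((r : ℂ) * Complex.exp (Complex.I * (θ : ℂ))))
      Filter.atTop (nhds (Complex.I • (1 : DMat m))))
    (hdec : ∀ ε > 0, ∃ C > 0, ∃ R > 0, ∀ r : ℝ, R ≤ r →
      ‖M1 ((r : ℂ) * Complex.exp (Complex.I * (θ : ℂ)))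
          - M2 ((r : ℂ) * Complex.exp (Complex.I * (θ : ℂ)))‖
        ≤ C * Real.exp (-2 * (r * Real.sin θ) * (a - ε))) :
    ∃ R0 > 0, (∀ r : ℝ, R0 ≤ r →
        IsUnit (α * αhᴴ + α * Jm m * αhᴴ * M1 ((r : ℂ) * Complex.exp (Complex.I * (θ : ℂ)))) ∧
        IsUnit (α * αhᴴ + α * Jm m * αhᴴ * M2 ((r : ℂ) * Complex.exp (Complex.I * (θ : ℂ))))) ∧
      ∀ ε > 0, ∃ C' > 0, ∃ R' > 0, ∀ r : ℝ, R' ≤ r →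
        ‖(-(α * Jm m * αhᴴ) + α * αhᴴ * M1 ((r : ℂ) * Complex.exp (Complex.I * (θ : ℂ)))) *
            (α * αhᴴ + α * Jm m * αhᴴ * M1 ((r : ℂ) * Complex.exp (Complex.I * (θ : ℂ))))⁻¹
          - (-(α * Jm m * αhᴴ) + α * αhᴴ * M2 ((r : ℂ) * Complex.exp (Complex.I * (θ : ℂ)))) *
            (α * αhᴴ + α * Jm m * αhᴴ * M2 ((r : ℂ) * Complex.exp (Complex.I * (θ : ℂ))))⁻¹‖
          ≤ C' * Real.exp (-2 * (r * Real.sin θ) * (a - ε)) := by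
  have hW : IsUnit (α * αhᴴ + α * Jm m * αhᴴ * (Complex.I • 1)) := by
    have hU := hα.mul_one_add_I_smul_Jm_mul_mem_unitaryGroup hαh
    rw [Matrix.mem_unitaryGroup_iff'] at hU
    convert IsUnit.of_mul_eq_one_right _ hU using 1
    simp only [Matrix.mul_add, Matrix.add_mul, Matrix.mul_one, Matrix.mul_smul, Matrix.smul_mul]
  have hden (X : ℂ → DMat m) (hX : Tendsto (fun r : ℝ =>
      X ((r : ℂ) * Complex.exp (Complex.I * (θ : ℂ)))) atTop (𝓝 (Complex.I • 1))) :=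
    (tendsto_const_nhds.add (tendsto_const_nhds.mul hX)).eventually_isUnit hW
  obtain ⟨R0, hR0, hunits⟩ :=
    exists_pos_forall_ge_of_eventually_atTop ((hden M1 hlim1).and (hden M2 hlim2))
  refine ⟨R0, hR0, hunits, fun ε hε => ?_⟩
  simp only [Matrix.nonsing_inv_eq_ringInverse]
  refine (isBigO_atTop_iff_exists_pos_bound fun r => (Real.exp_pos _).le).mp ?_
  exact (isBigO_linFrac_sub_linFrac hW hlim1 hlim2).trans
    ((isBigO_atTop_iff_exists_pos_bound fun r => (Real.exp_pos _).le).mpr (hdec ε hε))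

theorem statement17 (m : ℕ) (hm : 1 ≤ m)
    (α αh : Matrix (Fin m) (Fin m ⊕ Fin m) ℂ) (hα : IsBdry m α) (hαh : IsBdry m αh)
    (a θ : ℝ) (ha : 0 < a) (hθ0 : 0 < θ) (hθπ : θ < Real.pi)
    (M1 M2 : ℂ → DMat m)
    (hlim1 : Filter.Tendsto (fun r : ℝ => M1 ((r : ℂ) * Complex.exp (Complex.I * (θ : ℂ))))
      Filter.atTop (nhds (Complex.I • (1 : DMat m))))
    (hlim2 : Filter.Tendsto (fun r : ℝ => M2 ((r : ℂ) * Complex.exp (Complex.I * (θ : ℂ))))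
      Filter.atTop (nhds (Complex.I • (1 : DMat m))))
    (hdec : ∀ ε > 0, ∃ C > 0, ∃ R > 0, ∀ r : ℝ, R ≤ r →
      ‖M1 ((r : ℂ) * Complex.exp (Complex.I * (θ : ℂ)))
          - M2 ((r : ℂ) * Complex.exp (Complex.I * (θ : ℂ)))‖
        ≤ C * Real.exp (-2 * (r * Real.sin θ) * (a - ε))) :
    ∃ R0 > 0, (∀ r : ℝ, R0 ≤ r →
        IsUnit (α * αhᴴ + α * Jm m * αhᴴ * M1 ((r : ℂ) * Complex.exp (Complex.I * (θ : ℂ)))) ∧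
        IsUnit (α * αhᴴ + α * Jm m * αhᴴ * M2 ((r : ℂ) * Complex.exp (Complex.I * (θ : ℂ))))) ∧
      ∀ ε > 0, ∃ C' > 0, ∃ R' > 0, ∀ r : ℝ, R' ≤ r →
        ‖(-(α * Jm m * αhᴴ) + α * αhᴴ * M1 ((r : ℂ) * Complex.exp (Complex.I * (θ : ℂ)))) *
            (α * αhᴴ + α * Jm m * αhᴴ * M1 ((r : ℂ) * Complex.exp (Complex.I * (θ : ℂ))))⁻¹
          - (-(α * Jm m * αhᴴ) + α * αhᴴ * M2 ((r : ℂ) * Complex.exp (Complex.I * (θ : ℂ)))) *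
            (α * αhᴴ + α * Jm m * αhᴴ * M2 ((r : ℂ) * Complex.exp (Complex.I * (θ : ℂ))))⁻¹‖
          ≤ C' * Real.exp (-2 * (r * Real.sin θ) * (a - ε)) :=
  statement17_general m α αh hα hαh a θ M1 M2 hlim1 hlim2 hdec
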